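/- If at each step the agent with the smallest opinion (ties broken by lowest index) updates, then the neighbor set N_{μ(x(t))} of the updating agent and the value y(t) = max_{i ∈ N_{μ(x(t))}} x_i(t) are constant in t; the opinions of agents in N_{μ(x(0))} are non-decreasing and bounded above by y(0); and the opinions of agents outside N_{μ(x(0))} are constant. -/

import Mathlib

open scoped Classical
open Finset

noncomputable def nearList {n : ℕ} (x : Fin n → ℝ) (i : Fin n) : List (Fin n) :=
  @List.insertionSort (Fin n)
    (fun j j' => |x j - x i| < |x j' - x i| ∨ (|x j - x i| = |x j' - x i| ∧ j ≤ j'))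
    (Classical.decRel _) (List.finRange n)

/-- The set of the `k` agents nearest to `i` in opinion distance (ties broken by lower index). -/
noncomputable def nbr {n : ℕ} (k : ℕ) (x : Fin n → ℝ) (i : Fin n) : Finset (Fin n) :=
  ((nearList x i).take k).toFinset

/-- The asynchronous update `f(x,i)`. -/
noncomputable def upd {n : ℕ} (k : ℕ) (x : Fin n → ℝ) (i : Fin n) : Fin n → ℝ :=
  Function.update x i ((∑ j ∈ nbr k x i, x j) / k)

/-- A configuration is clustered if all neighbors of every agent share its opinion. -/
def Clustered {n : ℕ} (k : ℕ) (x : Fin n → ℝ) : Prop :=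
  ∀ i : Fin n, ∀ j ∈ nbr k x i, x j = x i

/-- `μ(x)`: lowest index attaining the minimum. -/
noncomputable def argminIdx {n : ℕ} [NeZero n] (x : Fin n → ℝ) : Fin n :=
  (Finset.univ.filter fun i => ∀ j, x i ≤ x j).min' (by
    obtain ⟨i, -, hi⟩ := Finset.exists_min_image Finset.univ x Finset.univ_nonempty
    exact ⟨i, Finset.mem_filter.mpr ⟨Finset.mem_univ _, fun j => hi j (Finset.mem_univ j)⟩⟩)

/-- `M(x)`: lowest index attaining the maximum. -/
noncomputable def argmaxIdx {n : ℕ} [NeZero n] (x : Fin n → ℝ) : Fin n :=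
  argminIdx (fun i => -x i)

/-- Trajectory of the dynamics with (possibly state-dependent) update selector `σ`. -/
noncomputable def traj {n : ℕ} (k : ℕ) (σ : ℕ → (Fin n → ℝ) → Fin n) (x0 : Fin n → ℝ) :
    ℕ → Fin n → ℝ
  | 0 => x0
  | t + 1 => upd k (traj k σ x0 t) (σ t (traj k σ x0 t))


/-!
Measured from the agent `m` of smallest opinion, the distance to agent `j` is `x j - x m`, so the
`k` neighbours of `m` are just the first `k` agents in the lexicographic order of
`(opinion, index)`, wherever `m` sits. Updating `m` moves its opinion to the mean of this group,
which lies between `x m` and the group maximum `Y`, and strictly below `Y` unless the whole group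
already sits at `Y`, in which case nothing moves. Every agent outside the group has opinion at
least `Y`, so the group stays the lexicographically first `k` agents, its maximum stays `Y`, and
only its members ever change.
-/

open Function
open scoped BigOperators

section IsLexInitial

variable {ι α : Type*} [LinearOrder ι] [LinearOrder α]

def IsLexInitial (f : ι → α) (S : Finset ι) : Prop :=
  ∀ a ∈ S, ∀ b ∉ S, toLex (f a, a) < toLex (f b, b)

theorem IsLexInitial.eq_of_card_eq {f : ι → α} {S T : Finset ι} (hS : IsLexInitial f S)
    (hT : IsLexInitial f T) (hcard : #S = #T) : S = T := by
  by_contra hne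
  obtain ⟨a, haS, haT⟩ := not_subset.1 fun h => hne (eq_of_subset_of_card_le h hcard.ge)
  obtain ⟨b, hbT, hbS⟩ := not_subset.1 fun h => hne (eq_of_subset_of_card_le h hcard.le).symm
  exact lt_asymm (hS a haS b hbS) (hT b hbT a haT)

theorem isLexInitial_comp_iff {β : Type*} [LinearOrder β] {g : α → β} (hg : StrictMono g)
    {f : ι → α} {S : Finset ι} : IsLexInitial (g ∘ f) S ↔ IsLexInitial f S := by
  simp only [IsLexInitial, comp_apply, Prod.Lex.toLex_lt_toLex, hg.lt_iff_lt, hg.injective.eq_iff]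

theorem IsLexInitial.update {f : ι → α} {S : Finset ι} {m : ι} {v Y : α}
    (hS : IsLexInitial f S) (hY : IsGreatest (f '' S) Y) (hm : m ∈ S) (hv : v < Y) :
    IsLexInitial (update f m v) S := by
  intro a ha b hb
  rw [update_of_ne (ne_of_mem_of_not_mem hm hb).symm]
  rcases eq_or_ne a m with rfl | ham
  · obtain ⟨j, hj, rfl⟩ := hY.1
    have hjb : f j ≤ f b := Prod.Lex.monotone_fst _ _ (hS j hj b hb).le
    rw [update_self]
    exact Prod.Lex.toLex_lt_toLex.2 (Or.inl (hv.trans_le hjb))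
  · rw [update_of_ne ham]
    exact hS a ha b hb

end IsLexInitial

theorem IsGreatest.image_update {ι α : Type*} [DecidableEq ι] [LinearOrder α] {f : ι → α}
    {S : Set ι} {m : ι} {v Y : α} (hY : IsGreatest (f '' S) Y) (hfm : f m < Y) (hv : v ≤ Y) :
    IsGreatest (update f m v '' S) Y := by
  obtain ⟨j, hj, rfl⟩ := hY.1
  have hjm : j ≠ m := by rintro rfl; exact hfm.false
  refine ⟨⟨j, hj, update_of_ne hjm _ _⟩, ?_⟩
  rintro _ ⟨a, ha, rfl⟩
  rcases eq_or_ne a m with rfl | ham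
  · rwa [update_self]
  · rw [update_of_ne ham]
    exact hY.2 ⟨a, ha, rfl⟩

section Neighbours

variable {n k : ℕ}

theorem nearList_perm (x : Fin n → ℝ) (i : Fin n) : (nearList x i).Perm (List.finRange n) :=
  @List.perm_insertionSort _ _ (Classical.decRel _) _

theorem nearList_pairwise (x : Fin n → ℝ) (i : Fin n) :
    (nearList x i).Pairwise fun a b => toLex (|x a - x i|, a) ≤ toLex (|x b - x i|, b) := by
  let r := fun a b : Fin n => |x a - x i| < |x b - x i| ∨ (|x a - x i| = |x b - x i| ∧ a ≤ b)
  have hr : ∀ a b, r a b ↔ toLex (|x a - x i|, a) ≤ toLex (|x b - x i|, b) :=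
    fun _ _ => by rw [Prod.Lex.toLex_le_toLex]
  let _ : DecidableRel r := Classical.decRel _
  have : Std.Total r := ⟨fun a b => by simp only [r, hr]; exact le_total _ _⟩
  have : IsTrans (Fin n) r := ⟨fun a b c => by simp only [r, hr]; exact le_trans⟩
  exact (List.pairwise_insertionSort r _).imp (hr _ _).1

theorem nbr_card (hkn : k ≤ n) (x : Fin n → ℝ) (i : Fin n) : #(nbr k x i) = k := by
  have hnodup : (nearList x i).Nodup := (nearList_perm x i).nodup_iff.2 (List.nodup_finRange n)
  rw [nbr, List.toFinset_card_of_nodup ((List.take_sublist k _).nodup hnodup), List.length_take,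
    (nearList_perm x i).length_eq, List.length_finRange, min_eq_left hkn]

theorem isLexInitial_nbr (k : ℕ) (x : Fin n → ℝ) (i : Fin n) :
    IsLexInitial (fun j => |x j - x i|) (nbr k x i) := by
  intro a ha b hb
  have hsplit := List.take_append_drop k (nearList x i)
  have hb' : b ∈ (nearList x i).drop k := by
    have hb'' : b ∈ nearList x i := (nearList_perm x i).mem_iff.2 (List.mem_finRange b)
    rw [← hsplit, List.mem_append] at hb''
    exact hb''.resolve_left fun h => hb (List.mem_toFinset.2 h)
  have hpw := nearList_pairwise x i
  rw [← hsplit] at hpw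
  refine ((List.pairwise_append.1 hpw).2.2 a (List.mem_toFinset.1 ha) b hb').lt_of_ne ?_
  exact fun h => ne_of_mem_of_not_mem ha hb (congrArg (fun p => (ofLex p).2) h)

theorem nbr_eq_of_isLexInitial (hkn : k ≤ n) {x : Fin n → ℝ} {i : Fin n} {S : Finset (Fin n)}
    (hS : IsLexInitial (fun j => |x j - x i|) S) (hcard : #S = k) : nbr k x i = S :=
  (isLexInitial_nbr k x i).eq_of_card_eq hS (by rw [nbr_card hkn, hcard])

section argminIdx

variable [NeZero n]

theorem apply_argminIdx_le (x : Fin n → ℝ) (j : Fin n) : x (argminIdx x) ≤ x j := by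
  have h : argminIdx x ∈ univ.filter fun i => ∀ j, x i ≤ x j := min'_mem _ _
  exact (mem_filter.1 h).2 j

theorem argminIdx_le_of_forall_le (x : Fin n → ℝ) {i : Fin n} (hi : ∀ j, x i ≤ x j) :
    argminIdx x ≤ i :=
  min'_le _ _ (mem_filter.2 ⟨mem_univ _, hi⟩)

theorem toLex_argminIdx_le (x : Fin n → ℝ) (j : Fin n) :
    toLex (x (argminIdx x), argminIdx x) ≤ toLex (x j, j) := by
  rcases (apply_argminIdx_le x j).lt_or_eq with h | h
  · exact Prod.Lex.toLex_le_toLex.2 (Or.inl h)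
  · exact Prod.Lex.toLex_le_toLex.2
      (Or.inr ⟨h, argminIdx_le_of_forall_le x fun l => h ▸ apply_argminIdx_le x l⟩)

theorem IsLexInitial.argminIdx_mem {x : Fin n → ℝ} {S : Finset (Fin n)} (hS : IsLexInitial x S)
    (hne : S.Nonempty) : argminIdx x ∈ S := by
  by_contra hm
  obtain ⟨a, ha⟩ := hne
  exact (hS a ha _ hm).not_ge (toLex_argminIdx_le x a)

theorem isLexInitial_dist_argminIdx_iff {x : Fin n → ℝ} {S : Finset (Fin n)} :
    IsLexInitial (fun j => |x j - x (argminIdx x)|) S ↔ IsLexInitial x S := by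
  have hdist : (fun j => |x j - x (argminIdx x)|) = (· - x (argminIdx x)) ∘ x :=
    funext fun j => abs_of_nonneg (sub_nonneg.2 (apply_argminIdx_le x j))
  rw [hdist, isLexInitial_comp_iff fun _ _ h => sub_lt_sub_right h _]

theorem nbr_argminIdx_eq_iff (hkn : k ≤ n) {x : Fin n → ℝ} {S : Finset (Fin n)}
    (hcard : #S = k) : nbr k x (argminIdx x) = S ↔ IsLexInitial x S := by
  rw [← isLexInitial_dist_argminIdx_iff]
  exact ⟨fun h => h ▸ isLexInitial_nbr k x _, fun h => nbr_eq_of_isLexInitial hkn h hcard⟩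

theorem upd_argminIdx_eq (hkn : k ≤ n) {x : Fin n → ℝ} {S : Finset (Fin n)}
    (hS : IsLexInitial x S) (hcard : #S = k) :
    upd k x (argminIdx x) = update x (argminIdx x) (𝔼 j ∈ S, x j) := by
  rw [upd, (nbr_argminIdx_eq_iff hkn hcard).2 hS, expect_eq_sum_div_card, hcard]

theorem upd_argminIdx_invariants (hkn : k ≤ n) {x : Fin n → ℝ} {S : Finset (Fin n)} {Y : ℝ}
    (hS : IsLexInitial x S) (hcard : #S = k) (hne : S.Nonempty) (hY : IsGreatest (x '' S) Y) :
    IsLexInitial (upd k x (argminIdx x)) S ∧ IsGreatest (upd k x (argminIdx x) '' S) Y ∧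
      x ≤ upd k x (argminIdx x) ∧ ∀ i ∉ S, upd k x (argminIdx x) i = x i := by
  set m := argminIdx x
  have hm : m ∈ S := hS.argminIdx_mem hne
  have hle : x m ≤ 𝔼 j ∈ S, x j := le_expect hne fun j _ => apply_argminIdx_le x j
  have hbound : ∀ j ∈ S, x j ≤ Y := fun j hj => hY.2 ⟨j, hj, rfl⟩
  rw [upd_argminIdx_eq hkn hS hcard]
  rcases (hbound m hm).lt_or_eq with hlt | heq
  · have hlt' : 𝔼 j ∈ S, x j < Y := expect_lt hbound ⟨m, hm, hlt⟩
    exact ⟨hS.update hY hm hlt', hY.image_update hlt hlt'.le,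
      le_update_iff.2 ⟨hle, fun _ _ => le_rfl⟩,
      fun i hi => update_of_ne (ne_of_mem_of_not_mem hm hi).symm _ _⟩
  · have hmean : 𝔼 j ∈ S, x j = x m :=
      le_antisymm (expect_le hne fun j hj => (hbound j hj).trans heq.ge) hle
    rw [hmean, update_eq_self]
    exact ⟨hS, hY, le_rfl, fun _ _ => rfl⟩

end argminIdx

end Neighbours

/-- when the minimum-opinion agent always updates, the neighbor set of the
updating agent and `y(t)` are constant, opinions inside the neighbor set are non-decreasing
and bounded by `y(0)`, and other opinions are constant. -/
theorem min_update_invariants {n k : ℕ} [NeZero n] (hk : 1 ≤ k) (hkn : k ≤ n)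
    (x0 : Fin n → ℝ) (X : ℕ → Fin n → ℝ)
    (hX : X = traj k (fun _ x => argminIdx x) x0)
    (y : ℕ → ℝ)
    (hy : ∀ t, y t = sSup (X t '' (nbr k (X t) (argminIdx (X t)) : Set (Fin n)))) :
    (∀ t, nbr k (X t) (argminIdx (X t)) = nbr k x0 (argminIdx x0)) ∧
    (∀ t, y t = y 0) ∧
    (∀ i ∈ nbr k x0 (argminIdx x0), Monotone (fun t => X t i) ∧ ∀ t, X t i ≤ y 0) ∧
    (∀ i ∉ nbr k x0 (argminIdx x0), ∀ t, X t i = x0 i) := by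
  set S := nbr k x0 (argminIdx x0)
  have hcard : #S = k := nbr_card hkn x0 _
  have hne : S.Nonempty := card_pos.1 (hcard ▸ hk)
  obtain ⟨Y, hY0⟩ : ∃ Y, IsGreatest (x0 '' S) Y :=
    ⟨_, by simpa using (S.image x0).isGreatest_max' (hne.image x0)⟩
  have hXsucc (t : ℕ) : X (t + 1) = upd k (X t) (argminIdx (X t)) := hX ▸ rfl
  have inv (t : ℕ) :
      IsLexInitial (X t) S ∧ IsGreatest (X t '' S) Y ∧ ∀ i ∉ S, X t i = x0 i := by
    induction t with
    | zero => exact hX ▸ ⟨(nbr_argminIdx_eq_iff hkn hcard).1 rfl, hY0, fun _ _ => rfl⟩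
    | succ t ih =>
      obtain ⟨hS, hY, -, hout⟩ := upd_argminIdx_invariants hkn ih.1 hcard hne ih.2.1
      exact hXsucc t ▸ ⟨hS, hY, fun i hi => (hout i hi).trans (ih.2.2 i hi)⟩
  have hnbr (t : ℕ) : nbr k (X t) (argminIdx (X t)) = S :=
    (nbr_argminIdx_eq_iff hkn hcard).2 (inv t).1
  have hyY (t : ℕ) : y t = Y := by rw [hy, hnbr]; exact (inv t).2.1.csSup_eq
  have hmono (t : ℕ) : X t ≤ X (t + 1) :=
    hXsucc t ▸ (upd_argminIdx_invariants hkn (inv t).1 hcard hne (inv t).2.1).2.2.1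
  refine ⟨hnbr, fun t => by rw [hyY, hyY], fun i hi => ⟨?_, fun t => ?_⟩,
    fun i hi t => (inv t).2.2 i hi⟩
  · exact monotone_nat_of_le_succ fun t => hmono t i
  · exact hyY 0 ▸ (inv t).2.1.2 ⟨i, hi, rfl⟩
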